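/- Let G be a finitely generated group and H ≤ G a finitely generated subgroup that is commensurated and weakly separable. Suppose H is weakly separable and let H₀ be the normal core of H (the intersection of all conjugates of H), which has finite index in H. Then H is separable in G if and only if H₀ is separable in G, which holds if and only if G/H₀ is residually finite. -/

import Mathlib

/-- A group is residually finite if every nontrivial element survives in some
finite quotient. -/
def ResiduallyFinite (Q : Type*) [Group Q] : Prop :=
  ∀ q : Q, q ≠ 1 → ∃ N : Subgroup Q, N.Normal ∧ N.FiniteIndex ∧ q ∉ N

/-- A subgroup `H ≤ G` is separable if it is the intersection of the finite
index subgroups of `G` containing it. -/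
def IsSeparableSubgroup {G : Type*} [Group G] (H : Subgroup G) : Prop :=
  ∀ g : G, g ∉ H → ∃ K : Subgroup G, K.FiniteIndex ∧ H ≤ K ∧ g ∉ K

/-- A subgroup `H ≤ G` is weakly separable if it is the intersection of
virtually normal subgroups of `G` containing it (a subgroup `K` is virtually
normal if it contains a finite index subgroup that is normal in `G`). -/
def WeaklySeparableSubgroup {G : Type*} [Group G] (H : Subgroup G) : Prop :=
  ∀ g : G, g ∉ H → ∃ K : Subgroup G, H ≤ K ∧ g ∉ K ∧
    ∃ N : Subgroup G, N.Normal ∧ N ≤ K ∧ (N.subgroupOf K).FiniteIndex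

open Subgroup Pointwise

section Key

variable {G : Type*} [Group G]

/-- The key lemma (Caprace–Kropholler–Reid–Wesolek): in a finitely generated
group, a commensurated weakly separable subgroup `H` admits a normal subgroup
`N` of `G` with `N.relindex H ≠ 0` and `H ∩ N ≤ H.normalCore`. -/
lemma CKRW_key (hG : Group.FG G) (H : Subgroup G)
    (hcomm : ∀ g : G, Commensurable (Subgroup.map (MulAut.conj g).toMonoidHom H) H)
    (hws : WeaklySeparableSubgroup H) :
    ∃ N : Subgroup G, N.Normal ∧ N.relIndex H ≠ 0 ∧
      ∀ h : G, h ∈ H → h ∈ N → h ∈ H.normalCore := by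
  classical
  obtain ⟨S₀, hS₀cl, hS₀fin⟩ := Group.fg_iff.mp hG
  -- symmetrized generating set
  set S : Set G := S₀ ∪ S₀⁻¹ with hS
  have hSfin : S.Finite := hS₀fin.union hS₀fin.inv
  have hScl : Subgroup.closure S = ⊤ :=
    top_unique (hS₀cl ▸ Subgroup.closure_mono Set.subset_union_left)
  have hSsymm : ∀ s ∈ S, s⁻¹ ∈ S := by
    intro s hs
    rcases hs with hs | hs
    · exact Or.inr (Set.inv_mem_inv.mpr hs)
    · exact Or.inl (by simpa using Set.inv_mem_inv.mpr hs)
  haveI : Finite ↥S := hSfin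
  -- conjugates of H and the associated finite quotients
  set C : G → Subgroup G := fun s => Subgroup.map (MulAut.conj s).toMonoidHom H with hC
  set U : G → Subgroup ↥H := fun s => (C s).subgroupOf H with hU
  have hUfin : ∀ s : G, (U s).FiniteIndex := fun s => ⟨(hcomm s).1⟩
  haveI hQfin : ∀ s : S, Finite (↥H ⧸ U s) := by
    intro s
    haveI := hUfin (s : G)
    infer_instance
  -- index type of "bad element" candidates
  let ι : Type _ := Σ s : S, (↥H ⧸ U (s : G)) × (↥H ⧸ U (s : G))
  haveI : Finite ι := by infer_instance
  let d : ι → G := fun i =>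
    ((i.2.1.out : ↥H) * (i.1 : G))⁻¹ * ((i.2.2.out : ↥H) * (i.1 : G))
  -- choose separating normal subgroups
  have hsel : ∀ i : ι, ∃ N : Subgroup G, N.Normal ∧ N.relIndex H ≠ 0 ∧
      (d i ∉ H → ∀ a ν b : G, a ∈ H → ν ∈ N → b ∈ H → d i ≠ a * ν * b) := by
    intro i
    by_cases hdi : d i ∈ H
    · exact ⟨⊤, inferInstance, by simp [Subgroup.relIndex_top_left], fun h => absurd hdi h⟩
    · obtain ⟨K, hHK, hdK, N, hNnorm, hNK, hNfin⟩ := hws (d i) hdi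
      refine ⟨N, hNnorm, ?_, ?_⟩
      · intro h0
        exact hNfin.index_ne_zero (Subgroup.relIndex_eq_zero_of_le_right hHK h0)
      · intro _ a ν b ha hν hb heq
        exact hdK (heq ▸ K.mul_mem (K.mul_mem (hHK ha) (hNK hν)) (hHK hb))
  choose Nf hNfnorm hNfrel hNfsep using hsel
  refine ⟨⨅ i, Nf i, ?_, Subgroup.relIndex_iInf_ne_zero hNfrel, ?_⟩
  · constructor
    intro n hn g
    rw [Subgroup.mem_iInf] at hn ⊢
    exact fun i => (hNfnorm i).conj_mem n (hn i) g
  set N : Subgroup G := ⨅ i, Nf i with hNdef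
  have hNnorm : N.Normal := by
    constructor
    intro n hn g
    rw [hNdef, Subgroup.mem_iInf] at hn ⊢
    exact fun i => (hNfnorm i).conj_mem n (hn i) g
  -- the atomic step: conjugation by a generator
  have key : ∀ s ∈ S, ∀ h : G, h ∈ H → h ∈ N → s⁻¹ * h * s ∈ H := by
    intro s hs h hH hN
    by_contra hout
    let q₁ : ↥H ⧸ U s := ((1 : ↥H) : ↥H ⧸ U s)
    let q₂ : ↥H ⧸ U s := ((⟨h, hH⟩ : ↥H) : ↥H ⧸ U s)
    let i : ι := ⟨⟨s, hs⟩, (q₁, q₂)⟩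
    set t : ↥H := q₁.out with ht
    set u : ↥H := q₂.out with hu
    have h₁ : t⁻¹ * 1 ∈ U s := by
      rw [← QuotientGroup.eq]
      exact QuotientGroup.out_eq' q₁
    have h₂ : u⁻¹ * (⟨h, hH⟩ : ↥H) ∈ U s := by
      rw [← QuotientGroup.eq]
      exact QuotientGroup.out_eq' q₂
    rw [mul_one] at h₁
    rw [Subgroup.mem_subgroupOf] at h₁ h₂
    obtain ⟨a, haH, ha⟩ := h₁
    obtain ⟨b, hbH, hb⟩ := h₂
    simp only [MulEquiv.coe_toMonoidHom, MulAut.conj_apply] at ha hb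
    -- ha : s * a * s⁻¹ = ↑t⁻¹ ; hb : s * b * s⁻¹ = ↑u⁻¹ * h
    have hdi : d i = a * (s⁻¹ * h * s) * b⁻¹ := by
      have hti : (t : G)⁻¹ = s * a * s⁻¹ := by
        rw [ha]; simp
      have hui : (u : G) = h * (s * b⁻¹ * s⁻¹) := by
        have : (u : G)⁻¹ * h = s * b * s⁻¹ := by rw [hb]; simp
        have h2 : (u : G)⁻¹ = s * b * s⁻¹ * h⁻¹ := by
          rw [← this]; group
        rw [← inv_inv (u : G), h2]; group
      show ((t : G) * s)⁻¹ * ((u : G) * s) = a * (s⁻¹ * h * s) * b⁻¹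
      rw [mul_inv_rev, mul_assoc, ← mul_assoc (t : G)⁻¹, hti, hui]
      group
    have hdiH : d i ∉ H := by
      intro hmem
      apply hout
      have : s⁻¹ * h * s = a⁻¹ * d i * b := by rw [hdi]; group
      rw [this]
      exact H.mul_mem (H.mul_mem (H.inv_mem haH) hmem) hbH
    have hν : s⁻¹ * h * s ∈ Nf i := by
      have hhi : h ∈ Nf i := by
        have := hN; rw [hNdef, Subgroup.mem_iInf] at this; exact this i
      have := (hNfnorm i).conj_mem h hhi s⁻¹
      simpa [mul_assoc] using this
    exact hNfsep i hdiH a (s⁻¹ * h * s) b⁻¹ haH hν (H.inv_mem hbH) hdi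
  -- word induction
  have word : ∀ x : G, ∀ h : G, h ∈ H → h ∈ N →
      (x⁻¹ * h * x ∈ H ∧ x * h * x⁻¹ ∈ H) := by
    intro x
    have hx : x ∈ Subgroup.closure S := hScl ▸ Subgroup.mem_top x
    induction hx using Subgroup.closure_induction with
    | mem s hs =>
      intro h hH hN
      constructor
      · exact key s hs h hH hN
      · have := key s⁻¹ (hSsymm s hs) h hH hN
        simpa using this
    | one =>
      intro h hH hN
      refine ⟨by simpa using hH, by simpa using hH⟩
    | mul x y hxc hyc hx hy =>
      intro h hH hN
      have hx1 := (hx h hH hN).1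
      have hxN1 : x⁻¹ * h * x ∈ N := by
        have := hNnorm.conj_mem h hN x⁻¹
        simpa [mul_assoc] using this
      have hy2 := (hy h hH hN).2
      have hyN2 : y * h * y⁻¹ ∈ N := hNnorm.conj_mem h hN y
      constructor
      · have e : (x * y)⁻¹ * h * (x * y) = y⁻¹ * (x⁻¹ * h * x) * y := by group
        rw [e]
        exact (hy _ hx1 hxN1).1
      · have e : (x * y) * h * (x * y)⁻¹ = x * (y * h * y⁻¹) * x⁻¹ := by group
        rw [e]
        exact (hx _ hy2 hyN2).2
    | inv x hxc hx =>
      intro h hH hN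
      exact ⟨by simpa using (hx h hH hN).2, by simpa using (hx h hH hN).1⟩
  intro h hH hN
  intro b
  exact (word b h hH hN).2
end Key

theorem separable_iff_normalCore_separable_iff_resFinite_quotient
    {G : Type*} [Group G] (hG : Group.FG G) (H : Subgroup G) (hH : Group.FG ↥H)
    (hcomm : ∀ g : G, Commensurable (Subgroup.map (MulAut.conj g).toMonoidHom H) H)
    (hws : WeaklySeparableSubgroup H) :
    (H.normalCore.subgroupOf H).FiniteIndex ∧
      (IsSeparableSubgroup H ↔ IsSeparableSubgroup H.normalCore) ∧
      (IsSeparableSubgroup H.normalCore ↔ ResiduallyFinite (G ⧸ H.normalCore)) := by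
  classical
  obtain ⟨N, hNnorm, hNrel, hNcore⟩ := CKRW_key hG H hcomm hws
  set H₀ := H.normalCore with hH₀
  -- Part 1
  have part1 : (H₀.subgroupOf H).FiniteIndex := by
    have hle : N.subgroupOf H ≤ H₀.subgroupOf H := by
      intro x hx
      rw [Subgroup.mem_subgroupOf] at hx ⊢
      exact hNcore x x.2 hx
    exact ⟨ne_zero_of_dvd_ne_zero hNrel (Subgroup.index_dvd_of_le hle)⟩
  have hP : ∀ x : G, x ∈ H₀ ↔ ∀ b : G, b * x * b⁻¹ ∈ H := fun x => Iff.rfl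
  let φ : G →* G ⧸ H₀ := QuotientGroup.mk' H₀
  have hφsurj : Function.Surjective φ := QuotientGroup.mk'_surjective H₀
  have hkerφ : ∀ x : G, φ x = 1 ↔ x ∈ H₀ := fun x => QuotientGroup.eq_one_iff x
  -- Part 3 : sep H₀ ↔ RF (G ⧸ H₀)
  have part3 : IsSeparableSubgroup H₀ ↔ ResiduallyFinite (G ⧸ H₀) := by
    constructor
    · intro hsep q hq
      obtain ⟨g, rfl⟩ := hφsurj q
      have hg : g ∉ H₀ := fun h => hq ((hkerφ g).mpr h)
      obtain ⟨K, hKfin, hK0, hgK⟩ := hsep g hg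
      haveI : K.FiniteIndex := hKfin
      haveI : K.normalCore.Normal := Subgroup.normalCore_normal K
      have hH0K' : H₀ ≤ K.normalCore := by
        haveI : H₀.Normal := Subgroup.normalCore_normal H
        exact Subgroup.normal_le_normalCore.mpr hK0
      refine ⟨(K.normalCore).map φ, Subgroup.Normal.map inferInstance φ hφsurj, ?_, ?_⟩
      · constructor
        have hcm : ((K.normalCore).map φ).comap φ = K.normalCore := by
          rw [Subgroup.comap_map_eq]
          have : φ.ker = H₀ := QuotientGroup.ker_mk' H₀
          rw [this, sup_eq_left.mpr hH0K']
        have : ((K.normalCore).map φ).index = K.normalCore.index := by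
          rw [← Subgroup.index_comap_of_surjective _ hφsurj, hcm]
        rw [this]
        exact Subgroup.FiniteIndex.index_ne_zero (H := K.normalCore)
      · intro hmem
        obtain ⟨k, hk, hkeq⟩ := hmem
        have : k⁻¹ * g ∈ H₀ := by
          rw [← hkerφ]
          simp only [map_mul, map_inv, hkeq]
          simp
        have : g ∈ K.normalCore := by
          have := K.normalCore.mul_mem hk (hH0K' this)
          simpa using this
        exact hgK (K.normalCore_le this)
    · intro hrf g hg
      have hq : φ g ≠ 1 := fun h => hg ((hkerφ g).mp h)
      obtain ⟨Nb, hNbnorm, hNbfin, hNbq⟩ := hrf (φ g) hq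
      refine ⟨Nb.comap φ, ?_, ?_, ?_⟩
      · exact ⟨by rw [Subgroup.index_comap_of_surjective _ hφsurj]; exact hNbfin.index_ne_zero⟩
      · intro x hx
        have h1 : φ x = 1 := (hkerφ x).mpr hx
        rw [Subgroup.mem_comap, h1]
        exact Nb.one_mem
      · intro hx
        exact hNbq hx
  -- Part 2 → : sep H → sep H₀
  have part2f : IsSeparableSubgroup H → IsSeparableSubgroup H₀ := by
    intro hsep g hg
    have : ∃ b : G, b * g * b⁻¹ ∉ H := by
      by_contra hcon
      push_neg at hcon
      exact hg ((hP g).mpr hcon)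
    obtain ⟨b, hb⟩ := this
    obtain ⟨K, hKfin, hHK, hgK⟩ := hsep (b * g * b⁻¹) hb
    refine ⟨K.comap (MulAut.conj b).toMonoidHom, ?_, ?_, ?_⟩
    · constructor
      rw [Subgroup.index_comap_of_surjective _ (MulAut.conj b).surjective]
      exact hKfin.index_ne_zero
    · intro x hx
      have : b * x * b⁻¹ ∈ H := (hP x).mp hx b
      simpa [Subgroup.mem_comap] using hHK this
    · intro hmem
      rw [Subgroup.mem_comap] at hmem
      exact hgK (by simpa using hmem)
  -- Part 2 ← : sep H₀ → sep H (via residual finiteness of the quotient)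
  have part2b : IsSeparableSubgroup H₀ → IsSeparableSubgroup H := by
    intro hsep g hg
    have hrf : ResiduallyFinite (G ⧸ H₀) := part3.mp hsep
    -- the image of H in the quotient is finite
    haveI : (H₀.subgroupOf H).FiniteIndex := part1
    haveI : Finite (↥H ⧸ H₀.subgroupOf H) := Subgroup.finite_quotient_of_finiteIndex
    set Hbar : Subgroup (G ⧸ H₀) := H.map φ with hHbar
    have hsurjF : ∀ y : ↥Hbar, ∃ z : ↥H ⧸ H₀.subgroupOf H,
        (Quotient.lift (fun h : ↥H => (⟨φ h, Subgroup.mem_map_of_mem φ h.2⟩ : ↥Hbar))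
          (by
            intro h₁ h₂ hrel
            have : h₁⁻¹ * h₂ ∈ H₀.subgroupOf H := (QuotientGroup.leftRel_apply).mp hrel
            rw [Subgroup.mem_subgroupOf] at this
            have h1 : φ ((↑h₁ : G)⁻¹ * ↑h₂) = 1 := (hkerφ _).mpr this
            have h2 : (φ ↑h₁)⁻¹ * φ ↑h₂ = 1 := by
              rw [← map_inv, ← map_mul]; exact h1
            exact Subtype.ext (inv_mul_eq_one.mp h2)) : ↥H ⧸ H₀.subgroupOf H → ↥Hbar) z = y := by
      intro y
      obtain ⟨x, hxH, hxeq⟩ := y.2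
      refine ⟨((⟨x, hxH⟩ : ↥H) : ↥H ⧸ H₀.subgroupOf H), ?_⟩
      exact Subtype.ext (by simpa using hxeq)
    haveI hHbarfin : Finite ↥Hbar := Finite.of_surjective _ hsurjF
    have hgbar : φ g ∉ Hbar := by
      intro hmem
      obtain ⟨x, hxH, hxeq⟩ := hmem
      have : x⁻¹ * g ∈ H₀ := by
        rw [← hkerφ]
        simp only [map_mul, map_inv, hxeq]
        simp
      exact hg (by simpa using H.mul_mem hxH (H.normalCore_le this))
    have hsel : ∀ b : ↥Hbar, ∃ M : Subgroup (G ⧸ H₀),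
        M.Normal ∧ M.FiniteIndex ∧ (↑b)⁻¹ * φ g ∉ M := by
      intro b
      have hne : (↑b : G ⧸ H₀)⁻¹ * φ g ≠ 1 := by
        intro h
        have : (↑b : G ⧸ H₀) = φ g := inv_mul_eq_one.mp h
        exact hgbar (this ▸ b.2)
      exact hrf _ hne
    choose Mf hMnorm hMfin hMnot using hsel
    set Mbar : Subgroup (G ⧸ H₀) := ⨅ b, Mf b with hMbar
    haveI hMbarnorm : Mbar.Normal := by
      constructor
      intro n hn x
      rw [hMbar, Subgroup.mem_iInf] at hn ⊢
      exact fun b => (hMnorm b).conj_mem n (hn b) x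
    have hMbarfin : Mbar.FiniteIndex :=
      ⟨Subgroup.index_iInf_ne_zero fun b => (hMfin b).index_ne_zero⟩
    set Kbar : Subgroup (G ⧸ H₀) := Hbar ⊔ Mbar with hKbar
    have hKbarfin : Kbar.FiniteIndex := by
      haveI := hMbarfin
      exact Subgroup.finiteIndex_of_le le_sup_right
    have hgKbar : φ g ∉ Kbar := by
      intro hmem
      have hmem' : φ g ∈ ((Hbar : Set (G ⧸ H₀)) * (Mbar : Set (G ⧸ H₀))) := by
        rw [← Subgroup.mul_normal Hbar Mbar]
        exact hmem
      rw [Set.mem_mul] at hmem'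
      obtain ⟨h, hh, m, hm, heq⟩ := hmem'
      apply hMnot ⟨h, hh⟩
      have : (h)⁻¹ * φ g = m := by rw [← heq]; group
      rw [this]
      have hmM : m ∈ Mbar := hm
      rw [hMbar, Subgroup.mem_iInf] at hmM
      exact hmM ⟨h, hh⟩
    refine ⟨Kbar.comap φ, ?_, ?_, ?_⟩
    · constructor
      rw [Subgroup.index_comap_of_surjective _ hφsurj]
      exact hKbarfin.index_ne_zero
    · intro x hx
      have : φ x ∈ Hbar := Subgroup.mem_map_of_mem φ hx
      exact Subgroup.mem_comap.mpr (Subgroup.mem_sup_left this)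
    · intro hmem
      exact hgKbar (Subgroup.mem_comap.mp hmem)
  exact ⟨part1, ⟨part2f, part2b⟩, part3⟩
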